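/- There exist absolute constants 0 < c ≤ C with the following property. Let 0 < δ₀ ≤ 10^{−10}, γ ∈ 𝔊₃(δ₀), and let ξ ∈ ℝ³, ξ ≠ 0, satisfy ξ₃ ≥ (9/10)|ξ| and |ξ_j| ≤ 8 δ₀ |ξ| for j = 1, 2. Let θ₂(ξ) ∈ [−1,1] be the unique zero of s ↦ ⟨γ''(s), ξ⟩ in [−1,1] and u(ξ) := ⟨γ'(θ₂(ξ)), ξ⟩, and assume u(ξ) < 0. Let θ₁^−(ξ) ≤ θ₁^+(ξ) be the two zeros of s ↦ ⟨γ'(s), ξ⟩ in [−1,1], and set v^±(ξ) := ⟨γ''(θ₁^±(ξ)), ξ⟩. Then each of the five quantities |v^+(ξ)|/|ξ|, |v^−(ξ)|/|ξ|, |θ₁^+(ξ) − θ₂(ξ)|, |θ₁^−(ξ) − θ₂(ξ)| and |θ₁^+(ξ) − θ₁^−(ξ)| lies in the interval [c (|u(ξ)|/|ξ|)^{1/2}, C (|u(ξ)|/|ξ|)^{1/2}]. -/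

import Mathlib

open MeasureTheory Real Set
open scoped InnerProductSpace ENNReal NNReal

noncomputable section

/-- The moment curve `γ∘(s) = (s, s²/2, s³/6)` in `ℝ³`. -/
def momentCurve (s : ℝ) : EuclideanSpace ℝ (Fin 3) :=
  (EuclideanSpace.equiv (Fin 3) ℝ).symm ![s, s ^ 2 / 2, s ^ 3 / 6]

/-!
Write `g s = ⟪γ' s, ξ⟫`. Since `γ'''` is uniformly close to `e₃` and `ξ` points almost along
`e₃`, `g'' = ⟪γ''', ξ⟫` lies between `|ξ|/2` and `2|ξ|` on `[-1, 1]`. So `g` is uniformly convex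
with minimum `u` at `θ₂`: `g θ - u` is comparable to `|ξ| (θ - θ₂)²` and `g' θ` to
`|ξ| (θ - θ₂)`. At a zero `θ` of `g` this gives `|θ - θ₂| ≈ (|u|/|ξ|)^{1/2}` and
`|g' θ| ≈ |ξ| |θ - θ₂|`. Comparing with the moment curve, `g (±1) ≈ ξ₃/2 > 0`, so `g` has one
zero on each side of `θ₂`, and `|θ₁⁺ - θ₁⁻|` is the sum of their distances to `θ₂`.
-/

theorem MonotoneOn.sub_mul_sub_nonneg {f : ℝ → ℝ} {D : Set ℝ} (hf : MonotoneOn f D)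
    {x y : ℝ} (hx : x ∈ D) (hy : y ∈ D) : 0 ≤ (f y - f x) * (y - x) := by
  rcases le_total x y with hxy | hyx
  · exact mul_nonneg (sub_nonneg.2 (hf hx hy hxy)) (sub_nonneg.2 hxy)
  · exact mul_nonneg_of_nonpos_of_nonpos (sub_nonpos.2 (hf hy hx hyx)) (sub_nonpos.2 hyx)

section DerivBounds

variable {φ φ' : ℝ → ℝ} {D : Set ℝ} {m M : ℝ}

theorem sub_mul_sub_bounds_of_deriv_bounds (hD : Convex ℝ D)
    (hφ : ∀ t ∈ D, HasDerivAt φ (φ' t) t) (hm : ∀ t ∈ D, m ≤ φ' t)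
    (hM : ∀ t ∈ D, φ' t ≤ M) {x y : ℝ} (hx : x ∈ D) (hy : y ∈ D) :
    m * (y - x) ^ 2 ≤ (φ y - φ x) * (y - x) ∧
      (φ y - φ x) * (y - x) ≤ M * (y - x) ^ 2 := by
  have hmono : ∀ ψ ψ' : ℝ → ℝ, (∀ t ∈ D, HasDerivAt ψ (ψ' t) t) →
      (∀ t ∈ D, 0 ≤ ψ' t) → MonotoneOn ψ D := fun ψ ψ' hψ hψ' =>
    monotoneOn_of_hasDerivWithinAt_nonneg hD
      (fun t ht => (hψ t ht).continuousAt.continuousWithinAt)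
      (fun t ht => (hψ t (interior_subset ht)).hasDerivWithinAt)
      (fun t ht => hψ' t (interior_subset ht))
  have hlow := (hmono (fun t => φ t - m * t) (fun t => φ' t - m)
    (fun t ht => (hφ t ht).sub ((hasDerivAt_id t).const_mul m |>.congr_deriv (mul_one m)))
    (fun t ht => sub_nonneg.2 (hm t ht))).sub_mul_sub_nonneg hx hy
  have hup := (hmono (fun t => M * t - φ t) (fun t => M - φ' t)
    (fun t ht => ((hasDerivAt_id t).const_mul M |>.congr_deriv (mul_one M)).sub (hφ t ht))
    (fun t ht => sub_nonneg.2 (hM t ht))).sub_mul_sub_nonneg hx hy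
  constructor <;> nlinarith

theorem abs_bounds_of_deriv_bounds (hD : Convex ℝ D)
    (hφ : ∀ t ∈ D, HasDerivAt φ (φ' t) t) (hm₀ : 0 ≤ m) (hm : ∀ t ∈ D, m ≤ φ' t)
    (hM : ∀ t ∈ D, φ' t ≤ M) {x₀ x : ℝ} (hx₀ : x₀ ∈ D) (hzero : φ x₀ = 0)
    (hx : x ∈ D) :
    m * |x - x₀| ≤ |φ x| ∧ |φ x| ≤ M * |x - x₀| := by
  obtain ⟨hlow, hup⟩ := sub_mul_sub_bounds_of_deriv_bounds hD hφ hm hM hx₀ hx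
  rw [hzero, sub_zero] at hlow hup
  have hprod : |φ x| * |x - x₀| = φ x * (x - x₀) := by
    rw [← abs_mul, abs_of_nonneg (le_trans (by positivity) hlow)]
  rcases eq_or_ne x x₀ with rfl | hne
  · simp [hzero]
  have hd : 0 < |x - x₀| := abs_pos.2 (sub_ne_zero.2 hne)
  rw [← sq_abs] at hlow hup
  constructor <;> nlinarith

theorem isMinOn_of_deriv_mul_sub_nonneg (hD : Convex ℝ D)
    (hφ : ∀ t ∈ D, HasDerivAt φ (φ' t) t) {x₀ : ℝ} (hx₀ : x₀ ∈ D)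
    (hsign : ∀ t ∈ D, 0 ≤ φ' t * (t - x₀)) : IsMinOn φ D x₀ := by
  have hcont : ∀ a b, Icc a b ⊆ D → ContinuousOn φ (Icc a b) :=
    fun a b hab t ht => (hφ t (hab ht)).continuousAt.continuousWithinAt
  have hderiv : ∀ a b, Icc a b ⊆ D →
      ∀ t ∈ interior (Icc a b), HasDerivWithinAt φ (φ' t) (interior (Icc a b)) t :=
    fun a b hab t ht => (hφ t (hab (interior_subset ht))).hasDerivWithinAt
  intro x hx
  rcases le_total x₀ x with hle | hle
  · have hsub := hD.ordConnected.out hx₀ hx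
    refine monotoneOn_of_hasDerivWithinAt_nonneg (convex_Icc x₀ x) (hcont _ _ hsub)
      (hderiv _ _ hsub) (fun t ht => ?_) (left_mem_Icc.2 hle) (right_mem_Icc.2 hle) hle
    rw [interior_Icc] at ht
    exact nonneg_of_mul_nonneg_left (hsign t (hsub (Ioo_subset_Icc_self ht))) (sub_pos.2 ht.1)
  · have hsub := hD.ordConnected.out hx hx₀
    refine antitoneOn_of_hasDerivWithinAt_nonpos (convex_Icc x x₀) (hcont _ _ hsub)
      (hderiv _ _ hsub) (fun t ht => ?_) (left_mem_Icc.2 hle) (right_mem_Icc.2 hle) hle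
    rw [interior_Icc] at ht
    exact nonpos_of_mul_nonneg_left (hsign t (hsub (Ioo_subset_Icc_self ht))) (sub_neg.2 ht.2)

theorem sub_bounds_of_deriv2_bounds {f : ℝ → ℝ} (hD : Convex ℝ D)
    (hf : ∀ t ∈ D, HasDerivAt f (φ t) t) (hφ : ∀ t ∈ D, HasDerivAt φ (φ' t) t)
    (hm : ∀ t ∈ D, m ≤ φ' t) (hM : ∀ t ∈ D, φ' t ≤ M) {x₀ x : ℝ} (hx₀ : x₀ ∈ D)
    (hcrit : φ x₀ = 0) (hx : x ∈ D) :
    m / 2 * (x - x₀) ^ 2 ≤ f x - f x₀ ∧ f x - f x₀ ≤ M / 2 * (x - x₀) ^ 2 := by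
  have hsq (c t : ℝ) : HasDerivAt (fun t => c / 2 * (t - x₀) ^ 2) (c * (t - x₀)) t :=
    ((((hasDerivAt_id t).sub_const x₀).pow 2).const_mul (c / 2)).congr_deriv
      (by simp only [id]; ring)
  have hslope (t : ℝ) (ht : t ∈ D) :
      m * (t - x₀) ^ 2 ≤ φ t * (t - x₀) ∧ φ t * (t - x₀) ≤ M * (t - x₀) ^ 2 := by
    simpa [hcrit] using sub_mul_sub_bounds_of_deriv_bounds hD hφ hm hM hx₀ ht
  have hlow : f x₀ - m / 2 * (x₀ - x₀) ^ 2 ≤ f x - m / 2 * (x - x₀) ^ 2 :=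
    isMinOn_of_deriv_mul_sub_nonneg hD (fun t ht => (hf t ht).sub (hsq m t)) hx₀
      (fun t ht => by nlinarith [hslope t ht]) hx
  have hup : M / 2 * (x₀ - x₀) ^ 2 - f x₀ ≤ M / 2 * (x - x₀) ^ 2 - f x :=
    isMinOn_of_deriv_mul_sub_nonneg hD (fun t ht => (hsq M t).sub (hf t ht)) hx₀
      (fun t ht => by nlinarith [hslope t ht]) hx
  constructor <;> nlinarith

end DerivBounds

theorem mem_Ioo_of_zeros_of_neg {g : ℝ → ℝ} {a b x θm θp : ℝ}
    (hg : ContinuousOn g (Icc a b)) (ha : 0 < g a) (hb : 0 < g b) (hx : x ∈ Icc a b)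
    (hgx : g x < 0) (hmp : θm ≤ θp) (hzeros : ∀ s ∈ Icc a b, g s = 0 → s = θm ∨ s = θp) :
    x ∈ Ioo θm θp := by
  obtain ⟨w, hw, hw0⟩ :=
    intermediate_value_Icc' hx.1 (hg.mono (Icc_subset_Icc_right hx.2)) ⟨hgx.le, ha.le⟩
  obtain ⟨z, hz, hz0⟩ :=
    intermediate_value_Icc hx.2 (hg.mono (Icc_subset_Icc_left hx.1)) ⟨hgx.le, hb.le⟩
  have hwx : w < x := hw.2.lt_of_ne (by rintro rfl; linarith)
  have hxz : x < z := hz.1.lt_of_ne (by rintro rfl; linarith)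
  constructor
  · rcases hzeros w ⟨hw.1, hw.2.trans hx.2⟩ hw0 with rfl | rfl <;> linarith
  · rcases hzeros z ⟨hx.1.trans hz.1, hz.2⟩ hz0 with rfl | rfl <;> linarith

section CriticalPoint

variable {g g' g'' : ℝ → ℝ} {n : ℝ}

theorem zero_bounds_of_deriv2_mem_Icc {D : Set ℝ} (hD : Convex ℝ D) (hn : 0 < n)
    (hg : ∀ t ∈ D, HasDerivAt g (g' t) t) (hg' : ∀ t ∈ D, HasDerivAt g' (g'' t) t)
    (hg'' : ∀ t ∈ D, g'' t ∈ Icc (n / 2) (2 * n)) {θ₂ θ : ℝ} (hθ₂ : θ₂ ∈ D)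
    (hcrit : g' θ₂ = 0) (hneg : g θ₂ < 0) (hθ : θ ∈ D) (hzero : g θ = 0) :
    |θ - θ₂| ∈ Icc √(|g θ₂| / n) (2 * √(|g θ₂| / n)) ∧
      |g' θ| / n ∈ Icc (1 / 2 * √(|g θ₂| / n)) (4 * √(|g θ₂| / n)) := by
  set r := √(|g θ₂| / n)
  have hr : r ^ 2 = -g θ₂ / n := by rw [sq_sqrt (by positivity), abs_of_neg hneg]
  have hm : ∀ t ∈ D, n / 2 ≤ g'' t := fun t ht => (hg'' t ht).1
  have hM : ∀ t ∈ D, g'' t ≤ 2 * n := fun t ht => (hg'' t ht).2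
  obtain ⟨hlow, hup⟩ := sub_bounds_of_deriv2_bounds hD hg hg' hm hM hθ₂ hcrit hθ
  obtain ⟨hslow, hsup⟩ :=
    abs_bounds_of_deriv_bounds hD hg' (by positivity) hm hM hθ₂ hcrit hθ
  rw [hzero, ← sq_abs] at hlow hup
  have hdist : |θ - θ₂| ∈ Icc r (2 * r) := by
    constructor
    · rw [← sq_le_sq₀ (sqrt_nonneg _) (abs_nonneg _), hr, div_le_iff₀ hn]
      linarith
    · rw [← sq_le_sq₀ (abs_nonneg _) (by positivity), mul_pow, hr, mul_div_assoc',
        le_div_iff₀ hn]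
      linarith
  refine ⟨hdist, ?_, ?_⟩
  · rw [le_div_iff₀ hn]
    nlinarith [hdist.1]
  · rw [div_le_iff₀ hn]
    nlinarith [hdist.2]

theorem zeros_bounds_of_deriv2_mem_Icc {a b : ℝ} (hn : 0 < n)
    (hg : ∀ t ∈ Icc a b, HasDerivAt g (g' t) t)
    (hg' : ∀ t ∈ Icc a b, HasDerivAt g' (g'' t) t)
    (hg'' : ∀ t ∈ Icc a b, g'' t ∈ Icc (n / 2) (2 * n)) (ha : 0 < g a) (hb : 0 < g b)
    {θ₂ θm θp : ℝ} (hθ₂ : θ₂ ∈ Icc a b) (hcrit : g' θ₂ = 0) (hneg : g θ₂ < 0)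
    (hθm : θm ∈ Icc a b) (hθp : θp ∈ Icc a b) (hmp : θm ≤ θp) (hzm : g θm = 0)
    (hzp : g θp = 0) (hzeros : ∀ s ∈ Icc a b, g s = 0 → s = θm ∨ s = θp) :
    |g' θp| / n ∈ Icc (1 / 2 * √(|g θ₂| / n)) (4 * √(|g θ₂| / n)) ∧
      |g' θm| / n ∈ Icc (1 / 2 * √(|g θ₂| / n)) (4 * √(|g θ₂| / n)) ∧
      |θp - θ₂| ∈ Icc (1 / 2 * √(|g θ₂| / n)) (4 * √(|g θ₂| / n)) ∧
      |θm - θ₂| ∈ Icc (1 / 2 * √(|g θ₂| / n)) (4 * √(|g θ₂| / n)) ∧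
      |θp - θm| ∈ Icc (1 / 2 * √(|g θ₂| / n)) (4 * √(|g θ₂| / n)) := by
  have hr := sqrt_nonneg (|g θ₂| / n)
  obtain ⟨hmθ₂, hθ₂p⟩ : θ₂ ∈ Ioo θm θp := mem_Ioo_of_zeros_of_neg
    (fun t ht => (hg t ht).continuousAt.continuousWithinAt) ha hb hθ₂ hneg hmp hzeros
  obtain ⟨hdp, hvp⟩ :=
    zero_bounds_of_deriv2_mem_Icc (convex_Icc a b) hn hg hg' hg'' hθ₂ hcrit hneg hθp hzp
  obtain ⟨hdm, hvm⟩ :=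
    zero_bounds_of_deriv2_mem_Icc (convex_Icc a b) hn hg hg' hg'' hθ₂ hcrit hneg hθm hzm
  have hsum : |θp - θm| = |θp - θ₂| + |θm - θ₂| := by
    rw [abs_of_pos (sub_pos.2 (hmθ₂.trans hθ₂p)), abs_of_pos (sub_pos.2 hθ₂p),
      abs_of_neg (sub_neg.2 hmθ₂)]
    ring
  refine ⟨hvp, hvm, ⟨?_, ?_⟩, ⟨?_, ?_⟩, ⟨?_, ?_⟩⟩ <;>
    linarith [hdp.1, hdp.2, hdm.1, hdm.2]

end CriticalPoint

section InnerProduct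

variable {E : Type*} [NormedAddCommGroup E] [InnerProductSpace ℝ E]

theorem abs_inner_sub_inner_le {a b ξ : E} {δ : ℝ} (h : ‖a - b‖ ≤ δ) :
    |⟪a, ξ⟫_ℝ - ⟪b, ξ⟫_ℝ| ≤ δ * ‖ξ‖ := by
  rw [← inner_sub_left]
  exact (abs_real_inner_le_norm _ _).trans (mul_le_mul_of_nonneg_right h (norm_nonneg ξ))

theorem hasDerivAt_inner_iteratedDeriv {γ : ℝ → E} {k : ℕ} (hγ : ContDiff ℝ (k + 1) γ)
    (ξ : E) (s : ℝ) :
    HasDerivAt (fun s => ⟪iteratedDeriv k γ s, ξ⟫_ℝ) ⟪iteratedDeriv (k + 1) γ s, ξ⟫_ℝ s := by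
  have h := (hγ.differentiable_iteratedDeriv' k s).hasDerivAt
  rw [← iteratedDeriv_succ] at h
  simpa using h.inner ℝ (hasDerivAt_const s ξ)

end InnerProduct

section MomentCurve

local notation "𝐞" i => EuclideanSpace.single (i : Fin 3) (1 : ℝ)

theorem momentCurve_eq :
    momentCurve = fun s => s • (𝐞 0) + (s ^ 2 / 2) • (𝐞 1) + (s ^ 3 / 6) • (𝐞 2) := by
  funext s
  ext i
  fin_cases i <;> simp [momentCurve, EuclideanSpace.equiv]

theorem iteratedDeriv_one_momentCurve :
    iteratedDeriv 1 momentCurve = fun s => (𝐞 0) + s • (𝐞 1) + (s ^ 2 / 2) • (𝐞 2) := by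
  rw [iteratedDeriv_one, momentCurve_eq]
  funext s
  refine ((((hasDerivAt_id s).smul_const _).add
    (((hasDerivAt_pow 2 s).div_const 2).smul_const _)).add
    (((hasDerivAt_pow 3 s).div_const 6).smul_const _)).deriv.trans ?_
  module

theorem iteratedDeriv_two_momentCurve :
    iteratedDeriv 2 momentCurve = fun s => (𝐞 1) + s • (𝐞 2) := by
  rw [iteratedDeriv_succ, iteratedDeriv_one_momentCurve]
  funext s
  refine (((hasDerivAt_const s _).add ((hasDerivAt_id s).smul_const _)).add
    (((hasDerivAt_pow 2 s).div_const 2).smul_const _)).deriv.trans ?_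
  module

theorem iteratedDeriv_three_momentCurve : iteratedDeriv 3 momentCurve = fun _ => 𝐞 2 := by
  rw [iteratedDeriv_succ, iteratedDeriv_two_momentCurve]
  funext s
  refine ((hasDerivAt_const s _).add ((hasDerivAt_id s).smul_const _)).deriv.trans ?_
  simp

theorem inner_iteratedDeriv_one_momentCurve (s : ℝ) (ξ : EuclideanSpace ℝ (Fin 3)) :
    ⟪iteratedDeriv 1 momentCurve s, ξ⟫_ℝ = ξ 0 + s * ξ 1 + s ^ 2 / 2 * ξ 2 := by
  rw [iteratedDeriv_one_momentCurve]
  simp [inner_add_left, real_inner_smul_left, EuclideanSpace.inner_single_left]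

theorem inner_iteratedDeriv_three_momentCurve (s : ℝ) (ξ : EuclideanSpace ℝ (Fin 3)) :
    ⟪iteratedDeriv 3 momentCurve s, ξ⟫_ℝ = ξ 2 := by
  rw [iteratedDeriv_three_momentCurve]
  simp [EuclideanSpace.inner_single_left]

end MomentCurve

section NearMomentCurve

variable {γ : ℝ → EuclideanSpace ℝ (Fin 3)} {δ₀ s : ℝ} {ξ : EuclideanSpace ℝ (Fin 3)}

theorem inner_iteratedDeriv_three_mem_Icc (hδ : δ₀ ≤ 1 / 100)
    (hs : ‖iteratedDeriv 3 γ s - iteratedDeriv 3 momentCurve s‖ ≤ δ₀)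
    (hξ₂ : 9 / 10 * ‖ξ‖ ≤ ξ 2) :
    ⟪iteratedDeriv 3 γ s, ξ⟫_ℝ ∈ Icc (‖ξ‖ / 2) (2 * ‖ξ‖) := by
  have h := abs_le.1 (abs_inner_sub_inner_le (ξ := ξ) hs)
  rw [inner_iteratedDeriv_three_momentCurve] at h
  have hξ₂' : ξ 2 ≤ ‖ξ‖ := (le_abs_self _).trans (PiLp.norm_apply_le ξ 2)
  have hδξ : δ₀ * ‖ξ‖ ≤ ‖ξ‖ / 100 := by nlinarith [norm_nonneg ξ]
  constructor <;> linarith [h.1, h.2]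

theorem inner_iteratedDeriv_one_pos (hδ : δ₀ ≤ 1 / 100) (hs₁ : |s| = 1)
    (hs : ‖iteratedDeriv 1 γ s - iteratedDeriv 1 momentCurve s‖ ≤ δ₀) (hξ : ξ ≠ 0)
    (hξ₂ : 9 / 10 * ‖ξ‖ ≤ ξ 2) (hξ₀ : |ξ 0| ≤ 8 * δ₀ * ‖ξ‖) (hξ₁ : |ξ 1| ≤ 8 * δ₀ * ‖ξ‖) :
    0 < ⟪iteratedDeriv 1 γ s, ξ⟫_ℝ := by
  have h := abs_le.1 (abs_inner_sub_inner_le (ξ := ξ) hs)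
  rw [inner_iteratedDeriv_one_momentCurve, ← sq_abs s, hs₁] at h
  have hsξ₁ : |s * ξ 1| = |ξ 1| := by rw [abs_mul, hs₁, one_mul]
  have hn : 0 < ‖ξ‖ := norm_pos_iff.2 hξ
  have hδξ : δ₀ * ‖ξ‖ ≤ ‖ξ‖ / 100 := by nlinarith
  linarith [h.1, neg_abs_le (ξ 0), neg_abs_le (s * ξ 1)]

end NearMomentCurve

theorem statement7 :
    ∃ c C : ℝ, 0 < c ∧ c ≤ C ∧
      ∀ δ₀ : ℝ, 0 < δ₀ → δ₀ ≤ (10 : ℝ) ^ (-(10 : ℤ)) →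
      ∀ γ : ℝ → EuclideanSpace ℝ (Fin 3), ContDiff ℝ (⊤ : ℕ∞) γ →
        γ 0 = 0 →
        (∀ j : Fin 3, iteratedDeriv ((j : ℕ) + 1) γ 0 = EuclideanSpace.single j 1) →
        (∀ j : ℕ, 1 ≤ j → j ≤ 4 → ∀ s ∈ Set.Icc (-1 : ℝ) 1,
          ‖iteratedDeriv j γ s - iteratedDeriv j momentCurve s‖ ≤ δ₀) →
      ∀ ξ : EuclideanSpace ℝ (Fin 3), ξ ≠ 0 →
        (9 / 10) * ‖ξ‖ ≤ ξ 2 → |ξ 0| ≤ 8 * δ₀ * ‖ξ‖ → |ξ 1| ≤ 8 * δ₀ * ‖ξ‖ →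
      ∀ θ₂ θm θp : ℝ,
        θ₂ ∈ Set.Icc (-1 : ℝ) 1 → ⟪iteratedDeriv 2 γ θ₂, ξ⟫_ℝ = 0 →
        ⟪iteratedDeriv 1 γ θ₂, ξ⟫_ℝ < 0 →
        θm ∈ Set.Icc (-1 : ℝ) 1 → θp ∈ Set.Icc (-1 : ℝ) 1 → θm ≤ θp →
        ⟪iteratedDeriv 1 γ θm, ξ⟫_ℝ = 0 → ⟪iteratedDeriv 1 γ θp, ξ⟫_ℝ = 0 →
        (∀ s ∈ Set.Icc (-1 : ℝ) 1, ⟪iteratedDeriv 1 γ s, ξ⟫_ℝ = 0 → s = θm ∨ s = θp) →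
        (c * Real.sqrt (|⟪iteratedDeriv 1 γ θ₂, ξ⟫_ℝ| / ‖ξ‖)
            ≤ |⟪iteratedDeriv 2 γ θp, ξ⟫_ℝ| / ‖ξ‖ ∧
          |⟪iteratedDeriv 2 γ θp, ξ⟫_ℝ| / ‖ξ‖
            ≤ C * Real.sqrt (|⟪iteratedDeriv 1 γ θ₂, ξ⟫_ℝ| / ‖ξ‖)) ∧
        (c * Real.sqrt (|⟪iteratedDeriv 1 γ θ₂, ξ⟫_ℝ| / ‖ξ‖)
            ≤ |⟪iteratedDeriv 2 γ θm, ξ⟫_ℝ| / ‖ξ‖ ∧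
          |⟪iteratedDeriv 2 γ θm, ξ⟫_ℝ| / ‖ξ‖
            ≤ C * Real.sqrt (|⟪iteratedDeriv 1 γ θ₂, ξ⟫_ℝ| / ‖ξ‖)) ∧
        (c * Real.sqrt (|⟪iteratedDeriv 1 γ θ₂, ξ⟫_ℝ| / ‖ξ‖) ≤ |θp - θ₂| ∧
          |θp - θ₂| ≤ C * Real.sqrt (|⟪iteratedDeriv 1 γ θ₂, ξ⟫_ℝ| / ‖ξ‖)) ∧
        (c * Real.sqrt (|⟪iteratedDeriv 1 γ θ₂, ξ⟫_ℝ| / ‖ξ‖) ≤ |θm - θ₂| ∧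
          |θm - θ₂| ≤ C * Real.sqrt (|⟪iteratedDeriv 1 γ θ₂, ξ⟫_ℝ| / ‖ξ‖)) ∧
        (c * Real.sqrt (|⟪iteratedDeriv 1 γ θ₂, ξ⟫_ℝ| / ‖ξ‖) ≤ |θp - θm| ∧
          |θp - θm| ≤ C * Real.sqrt (|⟪iteratedDeriv 1 γ θ₂, ξ⟫_ℝ| / ‖ξ‖)) := by
  refine ⟨1 / 2, 4, by norm_num, by norm_num, ?_⟩
  intro δ₀ _ hδ₀ γ hγ _ _ happrox ξ hξ hξ₂ hξ₀ hξ₁ θ₂ θm θp hθ₂ hcrit hneg hθm hθp hmp hzm hzp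
    hzeros
  have hδ : δ₀ ≤ 1 / 100 := hδ₀.trans (by norm_num)
  have hγ' : ∀ k : ℕ, ContDiff ℝ (k + 1) γ := fun k => hγ.of_le (mod_cast le_top)
  have hend : ∀ s : ℝ, |s| = 1 → 0 < ⟪iteratedDeriv 1 γ s, ξ⟫_ℝ := fun s hs =>
    inner_iteratedDeriv_one_pos hδ hs (happrox 1 le_rfl (by norm_num) s (abs_le.1 hs.le))
      hξ hξ₂ hξ₀ hξ₁
  exact zeros_bounds_of_deriv2_mem_Icc (norm_pos_iff.2 hξ)
    (fun s _ => hasDerivAt_inner_iteratedDeriv (hγ' 1) ξ s)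
    (fun s _ => hasDerivAt_inner_iteratedDeriv (hγ' 2) ξ s)
    (fun s hs => inner_iteratedDeriv_three_mem_Icc hδ
      (happrox 3 (by norm_num) (by norm_num) s hs) hξ₂)
    (hend (-1) (by norm_num)) (hend 1 (by norm_num))
    hθ₂ hcrit hneg hθm hθp hmp hzm hzp hzeros
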